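/- The Stieltjes transform of the semicircle law σ satisfies G_σ(z) = (1/2)(z - √(z²-4)) for z > 2, and the R-transform of σ is R_σ(x) = x; in particular G_σ(R_σ(x) + 1/x) = x for 0 < x < 1. -/

import Mathlib

/-!
For `z > 2` the integrand `√(4 - t²) / (z - t)` has the elementary primitive
`z arcsin (t/2) - √(4 - t²) + √(z² - 4) arcsin ((4 - z t) / (2 (z - t)))`,
whose second `arcsin` runs from `1` to `-1` as `t` runs from `-2` to `2`; evaluating it gives
`∫ √(4 - t²) / (z - t) dt = π (z - √(z² - 4))` over `[-2, 2]`, hence `G_σ(z) = (z - √(z² - 4)) / 2`.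
For `0 < x < 1` the point `z = x + 1/x` exceeds `2` and `√(z² - 4) = 1/x - x`, so `G_σ(x + 1/x) = x`,
i.e. `K_σ(x) = x + 1/x` and `R_σ(x) = x`.
-/

open MeasureTheory Real Set

theorem HasDerivAt.arcsin {f : ℝ → ℝ} {f' x : ℝ} (hf : HasDerivAt f f' x) (hx : f x ^ 2 < 1) :
    HasDerivAt (fun y => arcsin (f y)) (f' / √(1 - f x ^ 2)) x := by
  have hne : f x ≠ -1 ∧ f x ≠ 1 := by
    constructor <;> rintro h <;> rw [h] at hx <;> norm_num at hx
  exact ((hasDerivAt_arcsin hne.1 hne.2).comp x hf).congr_deriv (one_div_mul_eq_div _ _)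

theorem integral_withDensity_ofReal {X : Type*} [MeasurableSpace X] {μ : Measure X}
    {f : X → ℝ} (hf : Measurable f) (hf0 : ∀ x, 0 ≤ f x) (g : X → ℝ) :
    ∫ x, g x ∂μ.withDensity (fun x => ENNReal.ofReal (f x)) = ∫ x, f x * g x ∂μ := by
  rw [integral_withDensity_eq_integral_toReal_smul hf.ennreal_ofReal
    (ae_of_all _ fun _ => ENNReal.ofReal_lt_top)]
  simp only [ENNReal.toReal_ofReal (hf0 _), smul_eq_mul]

theorem integral_semicircle (g : ℝ → ℝ) :
    ∫ t, g t ∂(volume.restrict (Icc (-2 : ℝ) 2)).withDensity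
      (fun x => ENNReal.ofReal ((1 / (2 * π)) * √(4 - x ^ 2)))
      = (2 * π)⁻¹ * ∫ t in (-2 : ℝ)..2, √(4 - t ^ 2) * g t := by
  rw [integral_withDensity_ofReal (by fun_prop) (fun x => by positivity),
    integral_Icc_eq_integral_Ioc, ← intervalIntegral.integral_of_le (by norm_num),
    ← intervalIntegral.integral_const_mul]
  simp only [one_div, mul_assoc]

noncomputable def semicirclePrimitive (z t : ℝ) : ℝ :=
  z * arcsin (t / 2) - √(4 - t ^ 2) + √(z ^ 2 - 4) * arcsin ((4 - z * t) / (2 * (z - t)))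

section Primitive

variable {z t : ℝ}

theorem hasDerivAt_arcsin_half (ht : t ∈ Ioo (-2 : ℝ) 2) :
    HasDerivAt (fun t => arcsin (t / 2)) (1 / √(4 - t ^ 2)) t := by
  have hsq : (t / 2) ^ 2 < 1 := by nlinarith [ht.1, ht.2]
  have h4 : √(4 - t ^ 2) = 2 * √(1 - (t / 2) ^ 2) := by
    rw [show 4 - t ^ 2 = 2 ^ 2 * (1 - (t / 2) ^ 2) by ring, sqrt_mul (by norm_num),
      sqrt_sq (by norm_num)]
  have hpos : 0 < √(1 - (t / 2) ^ 2) := sqrt_pos.mpr (by linarith)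
  refine (((hasDerivAt_id' t).div_const 2).arcsin hsq).congr_deriv ?_
  rw [h4]
  field_simp

theorem one_sub_sq_arcsin_arg (hzt : z ≠ t) :
    1 - ((4 - z * t) / (2 * (z - t))) ^ 2 = (z ^ 2 - 4) * (4 - t ^ 2) / (2 * (z - t)) ^ 2 := by
  have : z - t ≠ 0 := sub_ne_zero.mpr hzt
  field_simp
  ring

theorem hasDerivAt_arcsin_arg (hz : 2 < z) (ht : t ∈ Ioo (-2 : ℝ) 2) :
    HasDerivAt (fun t => arcsin ((4 - z * t) / (2 * (z - t))))
      (-√(z ^ 2 - 4) / ((z - t) * √(4 - t ^ 2))) t := by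
  have hzt : 0 < z - t := by linarith [ht.2]
  have h4t : 0 < 4 - t ^ 2 := by nlinarith [ht.1, ht.2]
  have hz4 : 0 < z ^ 2 - 4 := by nlinarith
  have hsq := one_sub_sq_arcsin_arg (sub_pos.mp hzt).ne'
  have hlt : ((4 - z * t) / (2 * (z - t))) ^ 2 < 1 := by
    have : 0 < (z ^ 2 - 4) * (4 - t ^ 2) / (2 * (z - t)) ^ 2 := by positivity
    linarith
  have hroot : √(1 - ((4 - z * t) / (2 * (z - t))) ^ 2)
      = √(z ^ 2 - 4) * √(4 - t ^ 2) / (2 * (z - t)) := by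
    rw [hsq, sqrt_div' _ (by positivity), sqrt_mul hz4.le, sqrt_sq (by positivity)]
  have hquot : HasDerivAt (fun t => (4 - z * t) / (2 * (z - t)))
      ((-z * (2 * (z - t)) - (4 - z * t) * -2) / (2 * (z - t)) ^ 2) t :=
    (((hasDerivAt_id t).const_mul z).const_sub 4).div
      (((hasDerivAt_id t).const_sub z).const_mul 2) (by positivity) |>.congr_deriv (by simp)
  refine (hquot.arcsin hlt).congr_deriv ?_
  have : 0 < √(z ^ 2 - 4) := sqrt_pos.mpr hz4
  have : 0 < √(4 - t ^ 2) := sqrt_pos.mpr h4t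
  rw [hroot]
  field_simp
  rw [sq_sqrt hz4.le]
  ring

theorem hasDerivAt_semicirclePrimitive (hz : 2 < z) (ht : t ∈ Ioo (-2 : ℝ) 2) :
    HasDerivAt (semicirclePrimitive z) (√(4 - t ^ 2) / (z - t)) t := by
  have hzt : 0 < z - t := by linarith [ht.2]
  have h4t : 0 < 4 - t ^ 2 := by nlinarith [ht.1, ht.2]
  have hz4 : 0 < z ^ 2 - 4 := by nlinarith
  have hsqrt : HasDerivAt (fun t => √(4 - t ^ 2)) (-t / √(4 - t ^ 2)) t :=
    ((hasDerivAt_pow 2 t).const_sub 4).sqrt h4t.ne' |>.congr_deriv (by norm_num; field_simp)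
  refine ((((hasDerivAt_arcsin_half ht).const_mul z).sub hsqrt).add
    ((hasDerivAt_arcsin_arg hz ht).const_mul _)).congr_deriv ?_
  have : 0 < √(4 - t ^ 2) := sqrt_pos.mpr h4t
  field_simp
  linear_combination (-(sq_sqrt hz4.le) - sq_sqrt h4t.le)

theorem continuousOn_semicirclePrimitive (hz : 2 < z) :
    ContinuousOn (semicirclePrimitive z) (Icc (-2) 2) := by
  have hden : ∀ t ∈ Icc (-2 : ℝ) 2, 2 * (z - t) ≠ 0 := fun t ht => by linarith [ht.2]
  unfold semicirclePrimitive
  exact (by fun_prop : Continuous fun t => z * arcsin (t / 2) - √(4 - t ^ 2)).continuousOn.add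
    (continuousOn_const.mul (continuous_arcsin.comp_continuousOn
      ((by fun_prop : Continuous fun t => 4 - z * t).continuousOn.div (by fun_prop) hden)))

theorem semicirclePrimitive_two_sub_neg_two (hz : 2 < z) :
    semicirclePrimitive z 2 - semicirclePrimitive z (-2) = π * (z - √(z ^ 2 - 4)) := by
  have hright : (4 - z * 2) / (2 * (z - 2)) = -1 := by
    rw [div_eq_iff (by linarith)]; ring
  have hleft : (4 - z * -2) / (2 * (z - -2)) = 1 := by
    rw [div_eq_iff (by linarith)]; ring
  simp only [semicirclePrimitive, hright, hleft]
  norm_num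
  ring

theorem integral_sqrt_four_sub_sq_div_sub (hz : 2 < z) :
    ∫ t in (-2 : ℝ)..2, √(4 - t ^ 2) / (z - t) = π * (z - √(z ^ 2 - 4)) := by
  have hint : IntervalIntegrable (fun t => √(4 - t ^ 2) / (z - t)) volume (-2) 2 := by
    refine ContinuousOn.intervalIntegrable ?_
    rw [uIcc_of_le (by norm_num)]
    exact (by fun_prop : Continuous fun t : ℝ => √(4 - t ^ 2)).continuousOn.div (by fun_prop)
      fun t ht => by linarith [ht.2]
  rw [intervalIntegral.integral_eq_sub_of_hasDeriv_right_of_le (by norm_num)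
    (continuousOn_semicirclePrimitive hz)
    (fun t ht => (hasDerivAt_semicirclePrimitive hz ht).hasDerivWithinAt) hint,
    semicirclePrimitive_two_sub_neg_two hz]

end Primitive

theorem stieltjes_semicircle {z : ℝ} (hz : 2 < z) :
    ∫ t, (z - t)⁻¹ ∂(volume.restrict (Icc (-2 : ℝ) 2)).withDensity
      (fun x => ENNReal.ofReal ((1 / (2 * π)) * √(4 - x ^ 2)))
      = (z - √(z ^ 2 - 4)) / 2 := by
  simp only [integral_semicircle, ← div_eq_mul_inv, integral_sqrt_four_sub_sq_div_sub hz]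
  field_simp

theorem two_lt_add_inv {x : ℝ} (hx0 : 0 < x) (hx1 : x < 1) : 2 < x + x⁻¹ := by
  have hx1' : x - 1 ≠ 0 := by linarith
  have : 0 < (x - 1) ^ 2 / x := by positivity
  calc 2 < 2 + (x - 1) ^ 2 / x := by linarith
    _ = x + x⁻¹ := by field_simp; ring

theorem sqrt_add_inv_sq_sub_four {x : ℝ} (hx0 : 0 < x) (hx1 : x ≤ 1) :
    √((x + x⁻¹) ^ 2 - 4) = x⁻¹ - x := by
  have hle : x ≤ x⁻¹ := hx1.trans ((one_le_inv₀ hx0).mpr hx1)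
  rw [show (x + x⁻¹) ^ 2 - 4 = (x⁻¹ - x) ^ 2 by field_simp; ring, sqrt_sq (by linarith)]

/-- The Stieltjes transform of the semicircle law is `G_σ(z) = (z - √(z²-4))/2` for `z > 2`,
and the R-transform of `σ` is `R_σ(x) = x`: `G_σ(x + 1/x) = x` for `0 < x < 1`. -/
theorem semicircle_stieltjes_and_R_transform
    (σ : Measure ℝ)
    (hσ : σ = (volume.restrict (Set.Icc (-2 : ℝ) 2)).withDensity
      (fun x => ENNReal.ofReal ((1 / (2 * Real.pi)) * Real.sqrt (4 - x ^ 2)))) :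
    (∀ z : ℝ, 2 < z →
      (∫ t, (z - t)⁻¹ ∂σ) = (z - Real.sqrt (z ^ 2 - 4)) / 2) ∧
    (∀ x : ℝ, 0 < x → x < 1 →
      (∫ t, (x + x⁻¹ - t)⁻¹ ∂σ) = x) := by
  subst hσ
  refine ⟨fun z hz => stieltjes_semicircle hz, fun x hx0 hx1 => ?_⟩
  rw [stieltjes_semicircle (two_lt_add_inv hx0 hx1), sqrt_add_inv_sq_sub_four hx0 hx1.le]
  ring
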